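/- arXiv:2108.10277 — 4 statements merged into one kernel-verified Lean document; each statement's English description precedes it below -/
import Mathlib

section
/- For any N ≥ 1 and any real numbers h^1, ..., h^N, the Boltzmann selection function at index 0 dominates the Rosenbluth–Teller selection function at index 0: 1/(1 + Σ_{m=1}^N exp(h^m)) ≥ 1 - Σ_{m=1}^N exp(h^m)/(1 - min(1, exp(h^m)) + Σ_{l=1}^N exp(h^l)). -/
/-!
Each Rosenbluth–Teller denominator `1 - min 1 (exp hᵐ) + S` is at most the Boltzmann
denominator `1 + S`, where `S = ∑ exp hˡ`, so every Rosenbluth–Teller acceptance term dominates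
the Boltzmann one `exp hᵐ / (1 + S)`. Summing, the total acceptance probability dominates
`S / (1 + S) = 1 - 1 / (1 + S)`.
-/

open Finset

lemma Finset.sum_div_one_add_sum_le_sum_div_one_sub_add_sum {ι : Type*} (s : Finset ι)
    (w c : ι → ℝ) (hw : ∀ i ∈ s, 0 < w i) (hc₀ : ∀ i ∈ s, 0 ≤ c i) (hc₁ : ∀ i ∈ s, c i ≤ 1) :
    (∑ i ∈ s, w i) / (1 + ∑ i ∈ s, w i) ≤ ∑ i ∈ s, w i / (1 - c i + ∑ j ∈ s, w j) := by
  rw [sum_div]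
  refine sum_le_sum fun i hi => div_le_div_of_nonneg_left (hw i hi).le ?_ (by linarith [hc₀ i hi])
  have hwi_le_sum : w i ≤ ∑ j ∈ s, w j := single_le_sum (fun j hj => (hw j hj).le) hi
  linarith [hw i hi, hc₁ i hi]

lemma one_div_one_add_eq_one_sub_div {S : ℝ} (hS : 0 ≤ S) : 1 / (1 + S) = 1 - S / (1 + S) := by
  field_simp
  ring

theorem boltzmann_ge_rosenbluthTeller_at_zero_general (N : ℕ) (h : Fin N → ℝ) :
    1 / (1 + ∑ m : Fin N, Real.exp (h m)) ≥
      1 - ∑ m : Fin N, Real.exp (h m) /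
        (1 - min 1 (Real.exp (h m)) + ∑ l : Fin N, Real.exp (h l)) := by
  have hacceptance := univ.sum_div_one_add_sum_le_sum_div_one_sub_add_sum
    (fun m => Real.exp (h m)) (fun m => min 1 (Real.exp (h m)))
    (fun m _ => Real.exp_pos (h m)) (fun m _ => le_min zero_le_one (Real.exp_pos (h m)).le)
    (fun m _ => min_le_left _ _)
  rw [ge_iff_le, one_div_one_add_eq_one_sub_div (by positivity)]
  linarith

/-- Boltzmann vs Rosenbluth–Teller selection at index 0 (Peskun ordering). -/
theorem boltzmann_ge_rosenbluthTeller_at_zero (N : ℕ) (hN : 1 ≤ N) (h : Fin N → ℝ) :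
    1 / (1 + ∑ m : Fin N, Real.exp (h m)) ≥
      1 - ∑ m : Fin N, Real.exp (h m) /
        (1 - min 1 (Real.exp (h m)) + ∑ l : Fin N, Real.exp (h l)) :=
  boltzmann_ge_rosenbluthTeller_at_zero_general N h
end

section
/- Let N ≥ 1, σ > 0, a ∈ ℝ, and let X = (X₁,...,X_N) be a Gaussian vector with mean -a·1_N and covariance σ²Σ where Σ has 1 on the diagonal and 1/2 off the diagonal. Then E[ (Σ_{i=1}^N exp(X_i)) / (1 + Σ_{i=1}^N exp(X_i)) ] ≥ (1 + exp(σ²/2 + a)/N)^{-1}. -/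
open MeasureTheory ProbabilityTheory

open Finset Real

/-! With `S = ∑ i, exp X_i`, the integrand is `S / (1 + S) = g (S⁻¹)` for `g t = (1 + t)⁻¹`, which is
convex on `[0, ∞)`; Jensen gives `E[S / (1 + S)] ≥ (1 + E[S⁻¹])⁻¹`. By the harmonic–arithmetic mean
inequality `S⁻¹ ≤ N⁻² ∑ i, exp (-X_i)`, and each `exp (-X_i)` has the lognormal mean
`exp (σ² / 2 + a)`, so `E[S⁻¹] ≤ exp (σ² / 2 + a) / N`. -/

lemma inv_sum_exp_le_sum_exp_neg_div {ι : Type*} (s : Finset ι) (x : ι → ℝ) :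
    (∑ i ∈ s, exp (x i))⁻¹ ≤ (∑ i ∈ s, exp (-x i)) / (#s : ℝ) ^ 2 := by
  rcases s.eq_empty_or_nonempty with rfl | hs
  · simp
  have hsum : 0 < ∑ i ∈ s, exp (x i) := sum_pos (fun i _ => exp_pos _) hs
  have hcard : (0 : ℝ) < #s := by exact_mod_cast hs.card_pos
  have h := sq_sum_div_le_sum_sq_div s (fun _ => (1 : ℝ)) (fun i _ => exp_pos (x i))
  simp only [sum_const, nsmul_eq_mul, mul_one, one_pow, one_div, ← exp_neg] at h
  rw [le_div_iff₀ (by positivity), ← div_eq_inv_mul]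
  exact h

lemma convexOn_inv_one_add : ConvexOn ℝ (Set.Ici 0) fun x : ℝ => (1 + x)⁻¹ := by
  have h := (convexOn_zpow (𝕜 := ℝ) (-1)).translate_right 1
  simp only [zpow_neg_one] at h
  exact h.subset (fun x (hx : 0 ≤ x) => show 0 < 1 + x by positivity) (convex_Ici 0)

lemma inv_one_add_integral_le_integral {α : Type*} [MeasurableSpace α] {μ : Measure α}
    [IsProbabilityMeasure μ] {f : α → ℝ} (hf : Integrable f μ) (hf0 : 0 ≤ᵐ[μ] f) :
    (1 + ∫ x, f x ∂μ)⁻¹ ≤ ∫ x, (1 + f x)⁻¹ ∂μ := by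
  have hcont : ContinuousOn (fun x : ℝ => (1 + x)⁻¹) (Set.Ici 0) :=
    (continuousOn_const.add continuousOn_id).inv₀ fun x (hx : 0 ≤ x) => show 1 + x ≠ 0 by linarith
  refine convexOn_inv_one_add.map_integral_le hcont isClosed_Ici hf0 hf ?_
  refine (integrable_const (1 : ℝ)).mono' (hf.aemeasurable.const_add 1).inv.aestronglyMeasurable ?_
  filter_upwards [hf0] with x (hx : 0 ≤ f x)
  rw [Function.comp_apply, norm_inv, Real.norm_of_nonneg (by linarith)]
  exact inv_le_one_of_one_le₀ (by linarith)

lemma integral_exp_mul_gaussianReal_zero_one (t : ℝ) :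
    ∫ x, exp (t * x) ∂gaussianReal 0 1 = exp (t ^ 2 / 2) := by
  simpa [mgf] using congrFun (mgf_id_gaussianReal (μ := 0) (v := 1)) t

section GaussianPair

variable {ι : Type*} [Fintype ι]

lemma integrable_exp_mul_add_eval (t : ℝ) (i : ι) :
    Integrable (fun p : ℝ × (ι → ℝ) => exp (t * (p.1 + p.2 i)))
      ((gaussianReal 0 1).prod (Measure.pi fun _ : ι => gaussianReal 0 1)) := by
  simp_rw [mul_add, exp_add]
  exact (integrable_exp_mul_gaussianReal t).mul_prod
    (integrable_comp_eval (μ := fun _ : ι => gaussianReal 0 1) (i := i)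
      (integrable_exp_mul_gaussianReal t))

lemma integral_exp_mul_add_eval (t : ℝ) (i : ι) :
    ∫ p : ℝ × (ι → ℝ), exp (t * (p.1 + p.2 i))
      ∂(gaussianReal 0 1).prod (Measure.pi fun _ : ι => gaussianReal 0 1) = exp (t ^ 2) := by
  simp_rw [mul_add, exp_add]
  rw [integral_prod_mul (fun x => exp (t * x)) (fun z : ι → ℝ => exp (t * z i)),
    integral_comp_eval (μ := fun _ : ι => gaussianReal 0 1) (f := fun x => exp (t * x))
      (by fun_prop),
    integral_exp_mul_gaussianReal_zero_one, ← exp_add]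
  ring_nf

end GaussianPair

section InvSumExp

variable {α ι : Type*} [MeasurableSpace α] {μ : Measure α} [Fintype ι] {X : ι → α → ℝ}

lemma integrable_inv_sum_exp (hX : ∀ i, AEMeasurable (X i) μ)
    (hint : ∀ i, Integrable (fun x => exp (-X i x)) μ) :
    Integrable (fun x => (∑ i, exp (X i x))⁻¹) μ := by
  refine ((integrable_finsetSum univ fun i _ => hint i).div_const
    ((Fintype.card ι : ℝ) ^ 2)).mono'
    (by fun_prop : AEMeasurable _ μ).aestronglyMeasurable (ae_of_all _ fun x => ?_)
  rw [norm_inv, norm_of_nonneg (sum_nonneg fun i _ => (exp_pos _).le)]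
  exact inv_sum_exp_le_sum_exp_neg_div univ (X · x)

lemma integral_inv_sum_exp_le (hX : ∀ i, AEMeasurable (X i) μ)
    (hint : ∀ i, Integrable (fun x => exp (-X i x)) μ) :
    ∫ x, (∑ i, exp (X i x))⁻¹ ∂μ ≤ (∑ i, ∫ x, exp (-X i x) ∂μ) / (Fintype.card ι : ℝ) ^ 2 := by
  rw [← integral_finsetSum _ fun i _ => hint i, ← integral_div]
  exact integral_mono (integrable_inv_sum_exp hX hint)
    ((integrable_finsetSum univ fun i _ => hint i).div_const _)
    fun x => inv_sum_exp_le_sum_exp_neg_div univ (X · x)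

end InvSumExp

theorem expected_boltzmann_lower_bound_general (N : ℕ) (hN : 1 ≤ N) (σ a : ℝ) :
    (1 + Real.exp (σ ^ 2 / 2 + a) / N)⁻¹ ≤
      ∫ p : ℝ × (Fin N → ℝ),
        (∑ i : Fin N, Real.exp (-a + σ * (p.1 + p.2 i) / Real.sqrt 2)) /
          (1 + ∑ i : Fin N, Real.exp (-a + σ * (p.1 + p.2 i) / Real.sqrt 2))
        ∂((gaussianReal 0 1).prod (Measure.pi fun _ : Fin N => gaussianReal 0 1)) := by
  set μ := (gaussianReal 0 1).prod (Measure.pi fun _ : Fin N => gaussianReal 0 1)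
  set X : Fin N → ℝ × (Fin N → ℝ) → ℝ := fun i p => -a + σ * (p.1 + p.2 i) / √2
  have hX : ∀ i, AEMeasurable (X i) μ := fun i => by fun_prop
  have hexp : ∀ i, (fun p => exp (-X i p)) = fun p => exp a * exp (-(σ / √2) * (p.1 + p.2 i)) :=
    fun i => funext fun p => by rw [← exp_add]; congr 1; simp only [X]; ring
  have hint : ∀ i, Integrable (fun p => exp (-X i p)) μ := fun i => by
    rw [hexp]; exact (integrable_exp_mul_add_eval _ i).const_mul _
  have hmoment : ∀ i, ∫ p, exp (-X i p) ∂μ = exp (σ ^ 2 / 2 + a) := fun i => by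
    rw [hexp, integral_const_mul, integral_exp_mul_add_eval, ← exp_add, neg_sq, div_pow,
      sq_sqrt zero_le_two, add_comm]
  have hS : ∀ p, 0 < ∑ i, exp (X i p) := fun p =>
    sum_pos (fun i _ => exp_pos _) (univ_nonempty_iff.2 ⟨⟨0, hN⟩⟩)
  have hE : ∫ p, (∑ i, exp (X i p))⁻¹ ∂μ ≤ exp (σ ^ 2 / 2 + a) / N := by
    calc _ ≤ _ := integral_inv_sum_exp_le hX hint
      _ = _ := by
        simp only [hmoment, sum_const, card_univ, Fintype.card_fin, nsmul_eq_mul]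
        field_simp
  calc (1 + exp (σ ^ 2 / 2 + a) / N)⁻¹ ≤ (1 + ∫ p, (∑ i, exp (X i p))⁻¹ ∂μ)⁻¹ :=
        inv_anti₀ (by positivity) (by linarith)
    _ ≤ ∫ p, (1 + (∑ i, exp (X i p))⁻¹)⁻¹ ∂μ :=
        inv_one_add_integral_le_integral (integrable_inv_sum_exp hX hint)
          (ae_of_all _ fun p => (inv_pos.2 (hS p)).le)
    _ = ∫ p, (∑ i, exp (X i p)) / (1 + ∑ i, exp (X i p)) ∂μ :=
        integral_congr_ae (ae_of_all _ fun p => by field_simp [(hS p).ne']; ring)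

/-- Lower bound on the expected Boltzmann acceptance probability for an exchangeable
Gaussian vector `X ~ N(-a·1_N, σ²Σ)` with `Σ = ½(I_N + 1_N 1_Nᵀ)`, realised as
`X_i = -a + σ (W + Z_i)/√2` with `W, Z₁, …, Z_N` i.i.d. standard normal. -/
theorem expected_boltzmann_lower_bound (N : ℕ) (hN : 1 ≤ N) (σ a : ℝ) (hσ : 0 < σ) :
    (1 + Real.exp (σ ^ 2 / 2 + a) / N)⁻¹ ≤
      ∫ p : ℝ × (Fin N → ℝ),
        (∑ i : Fin N, Real.exp (-a + σ * (p.1 + p.2 i) / Real.sqrt 2)) /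
          (1 + ∑ i : Fin N, Real.exp (-a + σ * (p.1 + p.2 i) / Real.sqrt 2))
        ∂((gaussianReal 0 1).prod (Measure.pi fun _ : Fin N => gaussianReal 0 1)) :=
  expected_boltzmann_lower_bound_general N hN σ a
end

section
/- Let N ≥ 1, Σ := (1/2)(I_N + 1_N 1_N^T), ℓ > 0 and D ≥ 1. For z^0, ..., z^N ∈ ℝ, define z^{-n} := (z^0,...,z^{n-1},z^{n+1},...,z^N) ∈ ℝ^N. Then the Gaussian proposal density is exchangeable-symmetric: for all m, n ∈ {0,...,N}, N(z^{-m}; z^m·1_N, (ℓ/D)Σ) = N(z^{-n}; z^n·1_N, (ℓ/D)Σ). -/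
open MeasureTheory Matrix

/-- Multivariate Gaussian density with mean `μ` and covariance matrix `C`. -/
noncomputable def gaussN {N : ℕ} (μ : Fin N → ℝ) (C : Matrix (Fin N) (Fin N) ℝ)
    (x : Fin N → ℝ) : ℝ :=
  (Real.sqrt ((2 * Real.pi) ^ N * C.det))⁻¹ *
    Real.exp (-(1 / 2) * ((fun i => x i - μ i) ⬝ᵥ (C⁻¹ *ᵥ fun i => x i - μ i)))

/-!
The covariance matrix is the same for every centre, so only the quadratic form in the exponent
matters. Since `(I + 𝟙𝟙ᵀ)⁻¹ = I - 𝟙𝟙ᵀ / (N + 1)`, for `y = z⁻ⁿ - zⁿ 𝟙` this form is, up to the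
scalar factor, `‖y‖² - (∑ y)² / (N + 1)`. Restoring the vanishing coordinate `zⁿ - zⁿ` turns it
into `∑ₖ (zₖ - zⁿ)² - (∑ₖ (zₖ - zⁿ))² / (N + 1)`, which is `N + 1` times the empirical variance of
the shifted points and hence independent of the shift `zⁿ`.
-/

open Finset

lemma Fin.sum_succAbove_of_eq_zero {M : Type*} [AddCommMonoid M] {n : ℕ} (f : Fin (n + 1) → M)
    (p : Fin (n + 1)) (hp : f p = 0) : ∑ i, f (p.succAbove i) = ∑ i, f i := by
  rw [Fin.sum_univ_succAbove f p, hp, zero_add]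

section Field

variable {ι 𝕜 : Type*} [Fintype ι] [Field 𝕜]

lemma Matrix.inv_smul₀ [DecidableEq ι] (c : 𝕜) {A : Matrix ι ι 𝕜} (hA : IsUnit A.det) :
    (c • A)⁻¹ = c⁻¹ • A⁻¹ := by
  rcases eq_or_ne c 0 with rfl | hc
  · simp
  · exact inv_smul' A (Units.mk0 c hc) hA

lemma Matrix.of_one_mul_self :
    (of fun _ _ => 1 : Matrix ι ι 𝕜) * of (fun _ _ => 1) =
      (Fintype.card ι : 𝕜) • of fun _ _ => 1 := by
  ext i j
  simp [mul_apply]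

lemma Matrix.of_one_mulVec (w : ι → 𝕜) :
    (of fun _ _ => 1 : Matrix ι ι 𝕜) *ᵥ w = fun _ => ∑ i, w i := by
  ext
  simp [mulVec, dotProduct]

lemma Matrix.dotProduct_one_sub_smul_of_one_mulVec [DecidableEq ι] (t : 𝕜) (w : ι → 𝕜) :
    w ⬝ᵥ ((1 - t • of fun _ _ => 1 : Matrix ι ι 𝕜) *ᵥ w) = w ⬝ᵥ w - t * (∑ i, w i) ^ 2 := by
  rw [sub_mulVec, one_mulVec, smul_mulVec, of_one_mulVec, dotProduct_sub, dotProduct_smul,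
    smul_eq_mul]
  simp only [dotProduct, ← sum_mul]
  ring

variable [CharZero 𝕜]

lemma Matrix.one_add_of_one_mul_one_sub [DecidableEq ι] :
    (1 + of fun _ _ => 1 : Matrix ι ι 𝕜) *
      (1 - ((Fintype.card ι : 𝕜) + 1)⁻¹ • of fun _ _ => 1) = 1 := by
  set J : Matrix ι ι 𝕜 := of fun _ _ => 1
  set t : 𝕜 := ((Fintype.card ι : 𝕜) + 1)⁻¹ with ht_def
  have ht : 1 - t - t * Fintype.card ι = 0 := by
    have : (Fintype.card ι : 𝕜) + 1 ≠ 0 := Nat.cast_add_one_ne_zero _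
    rw [ht_def]
    field_simp
    ring
  calc (1 + J) * (1 - t • J) = 1 + (1 - t - t * Fintype.card ι) • J := by
        rw [add_mul, one_mul, mul_sub, mul_one, mul_smul_comm, of_one_mul_self, smul_smul]
        module
    _ = 1 := by rw [ht, zero_smul, add_zero]

lemma Matrix.inv_one_add_of_one [DecidableEq ι] :
    (1 + of fun _ _ => 1 : Matrix ι ι 𝕜)⁻¹ =
      1 - ((Fintype.card ι : 𝕜) + 1)⁻¹ • of fun _ _ => 1 :=
  inv_eq_right_inv one_add_of_one_mul_one_sub

lemma Matrix.isUnit_det_one_add_of_one [DecidableEq ι] :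
    IsUnit (1 + of fun _ _ => 1 : Matrix ι ι 𝕜).det :=
  isUnit_det_of_right_inverse one_add_of_one_mul_one_sub

lemma sum_sub_sq_sub_inv_card_mul_sq_sum_sub [Nonempty ι] (w : ι → 𝕜) (a : 𝕜) :
    ∑ i, (w i - a) ^ 2 - (Fintype.card ι : 𝕜)⁻¹ * (∑ i, (w i - a)) ^ 2 =
      ∑ i, w i ^ 2 - (Fintype.card ι : 𝕜)⁻¹ * (∑ i, w i) ^ 2 := by
  have : (Fintype.card ι : 𝕜) ≠ 0 := Nat.cast_ne_zero.mpr Fintype.card_ne_zero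
  simp only [sub_sq, sum_add_distrib, sum_sub_distrib, sum_const, card_univ, nsmul_eq_mul,
    ← sum_mul, ← mul_sum]
  field_simp
  ring

end Field

lemma Fin.removeNth_sub_dotProduct_inv_smul_one_add_of_one_mulVec {𝕜 : Type*} [Field 𝕜]
    [CharZero 𝕜] {N : ℕ} (c : 𝕜) (z : Fin (N + 1) → 𝕜) (p : Fin (N + 1)) :
    (fun i => p.removeNth z i - z p) ⬝ᵥ
        ((c • (1 + of fun _ _ => 1 : Matrix (Fin N) (Fin N) 𝕜))⁻¹ *ᵥ
          fun i => p.removeNth z i - z p) =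
      c⁻¹ * (∑ k, z k ^ 2 - ((N : 𝕜) + 1)⁻¹ * (∑ k, z k) ^ 2) := by
  have hsq : ∑ i, (p.removeNth z i - z p) ^ 2 = ∑ k, (z k - z p) ^ 2 :=
    Fin.sum_succAbove_of_eq_zero (fun k => (z k - z p) ^ 2) p (by simp)
  have hsum : ∑ i, (p.removeNth z i - z p) = ∑ k, (z k - z p) :=
    Fin.sum_succAbove_of_eq_zero (fun k => z k - z p) p (sub_self _)
  have hshift := sum_sub_sq_sub_inv_card_mul_sq_sum_sub z (z p)
  rw [Fintype.card_fin, Nat.cast_succ] at hshift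
  rw [inv_smul₀ c isUnit_det_one_add_of_one, inv_one_add_of_one, smul_mulVec, dotProduct_smul,
    dotProduct_one_sub_smul_of_one_mulVec, smul_eq_mul, Fintype.card_fin]
  simp only [dotProduct, ← sq]
  rw [hsq, hsum, hshift]

theorem proposal_density_symmetric_general (N : ℕ) (D : ℕ)
    (ℓ : ℝ) (z : Fin (N + 1) → ℝ) (m n : Fin (N + 1)) :
    gaussN (fun _ => z m)
        ((ℓ / D) • ((1 / 2 : ℝ) •
          ((1 : Matrix (Fin N) (Fin N) ℝ) + Matrix.of fun _ _ => (1 : ℝ))))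
        (m.removeNth z) =
      gaussN (fun _ => z n)
        ((ℓ / D) • ((1 / 2 : ℝ) •
          ((1 : Matrix (Fin N) (Fin N) ℝ) + Matrix.of fun _ _ => (1 : ℝ))))
        (n.removeNth z) := by
  simp only [gaussN, smul_smul, Fin.removeNth_sub_dotProduct_inv_smul_one_add_of_one_mulVec]

/-- Exchangeable symmetry of the random-walk proposal density: for points `z⁰,…,zᴺ`,
the density of the remaining points given centre `zᵐ` does not depend on `m`. -/
theorem proposal_density_symmetric (N : ℕ) (hN : 1 ≤ N) (D : ℕ) (hD : 1 ≤ D)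
    (ℓ : ℝ) (hl : 0 < ℓ) (z : Fin (N + 1) → ℝ) (m n : Fin (N + 1)) :
    gaussN (fun _ => z m)
        ((ℓ / D) • ((1 / 2 : ℝ) •
          ((1 : Matrix (Fin N) (Fin N) ℝ) + Matrix.of fun _ _ => (1 : ℝ))))
        (m.removeNth z) =
      gaussN (fun _ => z n)
        ((ℓ / D) • ((1 / 2 : ℝ) •
          ((1 : Matrix (Fin N) (Fin N) ℝ) + Matrix.of fun _ _ => (1 : ℝ))))
        (n.removeNth z) :=
  proposal_density_symmetric_general N D ℓ z m n
end

section
/- Let V ~ N(-ℓI/2, ℓI·Σ) be an N-dimensional Gaussian with mean -(ℓI/2)·1_N and covariance ℓI·Σ where Σ = (1/2)(I_N + 1_N 1_N^T), ℓ > 0, I ≥ 0. Then the limiting acceptance rate E[ Σ_{n=1}^N exp(V^n) / (1 + Σ_{m=1}^N exp(V^m)) ] is at least (1 + exp(ℓI)/N)^{-1}, and in particular is strictly positive. -/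
/-! By Cauchy–Schwarz, `F = ∑ₙ exp Vⁿ` and `G = N⁻² ∑ₙ exp (-Vⁿ)` satisfy `F G ≥ 1`, hence
`F / (1 + F) ≥ (1 + G)⁻¹`. Jensen's inequality for the convex map `q ↦ (1 + q)⁻¹`, used through
its tangent line at `E G`, gives `E[F / (1 + F)] ≥ (1 + E G)⁻¹`, and the Gaussian moment
generating function gives `E exp (-Vⁿ) = exp (ℓ I)`, i.e. `E G = exp (ℓ I) / N`. -/

open MeasureTheory ProbabilityTheory Real Finset

lemma sq_card_le_sum_exp_mul_sum_exp_neg {ι : Type*} [Fintype ι] (x : ι → ℝ) :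
    (Fintype.card ι : ℝ) ^ 2 ≤ (∑ i, exp (x i)) * ∑ i, exp (-x i) := by
  simpa using sum_sq_le_sum_mul_sum_of_sq_le_mul univ (r := fun _ => (1 : ℝ))
    (fun i _ => (exp_pos (x i)).le) (fun i _ => (exp_pos (-x i)).le)
    (fun i _ => by simp [← exp_add])

lemma inv_one_add_le_div_one_add {s q : ℝ} (hs : 0 < s) (hsq : 1 ≤ s * q) :
    (1 + q)⁻¹ ≤ s / (1 + s) := by
  have hq : 0 < q := pos_of_mul_pos_right (one_pos.trans_le hsq) hs.le
  rw [inv_eq_one_div, div_le_div_iff₀ (by positivity) (by positivity)]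
  linarith

lemma tangent_le_inv_one_add {q c : ℝ} (hq : 0 < 1 + q) (hc : 0 < 1 + c) :
    (1 + 2 * c - q) / (1 + c) ^ 2 ≤ (1 + q)⁻¹ := by
  rw [inv_eq_one_div, div_le_div_iff₀ (by positivity) hq]
  nlinarith [sq_nonneg (q - c)]

theorem inv_one_add_integral_le_integral_div_one_add {Ω : Type*} [MeasurableSpace Ω]
    {μ : Measure Ω} [IsProbabilityMeasure μ] {F G : Ω → ℝ} (hF : AEMeasurable F μ)
    (hG : Integrable G μ) (hF_pos : ∀ᵐ ω ∂μ, 0 < F ω) (hFG : ∀ᵐ ω ∂μ, 1 ≤ F ω * G ω) :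
    (1 + ∫ ω, G ω ∂μ)⁻¹ ≤ ∫ ω, F ω / (1 + F ω) ∂μ := by
  set c := ∫ ω, G ω ∂μ
  have hG_pos : ∀ᵐ ω ∂μ, 0 < G ω := by
    filter_upwards [hF_pos, hFG] with ω h₁ h₂
    exact pos_of_mul_pos_right (one_pos.trans_le h₂) h₁.le
  have hc : 0 ≤ c := integral_nonneg_of_ae (hG_pos.mono fun _ h => h.le)
  have h_tangent : Integrable (fun ω => (1 + 2 * c - G ω) / (1 + c) ^ 2) μ :=
    ((integrable_const _).sub hG).div_const _
  have h_ratio : Integrable (fun ω => F ω / (1 + F ω)) μ := by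
    refine .of_bound (hF.div (aemeasurable_const.add hF)).aestronglyMeasurable 1 ?_
    filter_upwards [hF_pos] with ω h
    rw [norm_of_nonneg (by positivity), div_le_one (by positivity)]
    linarith
  calc (1 + c)⁻¹ = ∫ ω, (1 + 2 * c - G ω) / (1 + c) ^ 2 ∂μ := by
        rw [integral_div, integral_sub (integrable_const _) hG, integral_const, probReal_univ,
          one_smul]
        field_simp
        ring
    _ ≤ ∫ ω, F ω / (1 + F ω) ∂μ := by
        refine integral_mono_ae h_tangent h_ratio ?_
        filter_upwards [hF_pos, hG_pos, hFG] with ω hF hG hFG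
        exact (tangent_le_inv_one_add (by linarith) (by linarith)).trans
          (inv_one_add_le_div_one_add hF hFG)

section ProductOfSumAndEval

variable {ι : Type*} [Fintype ι] (μ : Measure ℝ) (ν : ι → Measure ℝ)
  [∀ i, IsProbabilityMeasure (ν i)]

lemma integrable_exp_mul_fst_add_eval {t : ℝ} (i : ι)
    (hμ : Integrable (fun x => exp (t * x)) μ) (hν : Integrable (fun x => exp (t * x)) (ν i)) :
    Integrable (fun p : ℝ × (ι → ℝ) => exp (t * (p.1 + p.2 i))) (μ.prod (Measure.pi ν)) := by
  have h := hμ.mul_prod ((measurePreserving_eval ν i).integrable_comp_of_integrable hν)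
  simp only [mul_add, exp_add]
  exact h

lemma integral_exp_mul_fst_add_eval [SigmaFinite μ] (t : ℝ) (i : ι) :
    ∫ p : ℝ × (ι → ℝ), exp (t * (p.1 + p.2 i)) ∂(μ.prod (Measure.pi ν)) =
      mgf id μ t * mgf id (ν i) t := by
  simp only [mul_add, exp_add]
  rw [integral_prod_mul (fun x => exp (t * x)) (fun z : ι → ℝ => exp (t * z i))]
  congr 1
  rw [← (measurePreserving_eval ν i).map_eq, mgf,
    integral_map (measurePreserving_eval ν i).measurable.aemeasurable (by fun_prop)]
  rfl

end ProductOfSumAndEval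

lemma integrable_exp_add_mul_fst_add_eval_gaussianReal {ι : Type*} [Fintype ι] (b t : ℝ) (i : ι) :
    Integrable (fun p : ℝ × (ι → ℝ) => exp (b + t * (p.1 + p.2 i)))
      ((gaussianReal 0 1).prod (Measure.pi fun _ => gaussianReal 0 1)) := by
  simp only [exp_add b]
  exact (integrable_exp_mul_fst_add_eval _ _ i (integrable_exp_mul_gaussianReal t)
    (integrable_exp_mul_gaussianReal t)).const_mul _

lemma integral_exp_add_mul_fst_add_eval_gaussianReal {ι : Type*} [Fintype ι] (b t : ℝ) (i : ι) :
    ∫ p : ℝ × (ι → ℝ), exp (b + t * (p.1 + p.2 i))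
      ∂(gaussianReal 0 1).prod (Measure.pi fun _ => gaussianReal 0 1) = exp (b + t ^ 2) := by
  simp only [exp_add b]
  rw [integral_const_mul, integral_exp_mul_fst_add_eval, mgf_id_gaussianReal, ← exp_add]
  congr 2
  push_cast
  ring

/-- Limiting RW-EHMM acceptance rate: for `V ~ N(-(ℓI/2)·1_N, ℓI·Σ)` with
`Σ = ½(I_N + 1_N 1_Nᵀ)`, realised as `Vⁿ = -(ℓI/2) + √(ℓI)(W + Zₙ)/√2` with
`W, Z₁,…,Z_N` i.i.d. standard normal, the expected acceptance probability is at
least `(1 + exp(ℓI)/N)⁻¹ > 0`. -/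
theorem limiting_acceptance_rate_lower_bound (N : ℕ) (hN : 1 ≤ N)
    (ℓ I : ℝ) (hl : 0 < ℓ) (hI : 0 ≤ I) :
    (1 + Real.exp (ℓ * I) / N)⁻¹ ≤
      ∫ p : ℝ × (Fin N → ℝ),
        (∑ n : Fin N,
            Real.exp (-(ℓ * I / 2) + Real.sqrt (ℓ * I) * (p.1 + p.2 n) / Real.sqrt 2)) /
          (1 + ∑ n : Fin N,
            Real.exp (-(ℓ * I / 2) + Real.sqrt (ℓ * I) * (p.1 + p.2 n) / Real.sqrt 2))
        ∂((gaussianReal 0 1).prod (Measure.pi fun _ : Fin N => gaussianReal 0 1)) := by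
  have : Nonempty (Fin N) := Fin.pos_iff_nonempty.mp hN
  set V : ℝ × (Fin N → ℝ) → Fin N → ℝ :=
    fun p n => -(ℓ * I / 2) + √(ℓ * I) * (p.1 + p.2 n) / √2
  set a := √(ℓ * I) / √2
  have h_neg_V (p : ℝ × (Fin N → ℝ)) (n : Fin N) : -V p n = ℓ * I / 2 + -a * (p.1 + p.2 n) := by
    simp only [V, a]
    ring
  have ha : (-a) ^ 2 = ℓ * I / 2 := by
    rw [neg_sq, div_pow, sq_sqrt (by positivity), sq_sqrt zero_le_two]
  have h_int (n : Fin N) : Integrable (fun p => exp (-V p n))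
      ((gaussianReal 0 1).prod (Measure.pi fun _ => gaussianReal 0 1)) := by
    simpa only [h_neg_V] using integrable_exp_add_mul_fst_add_eval_gaussianReal _ _ n
  have key := inv_one_add_integral_le_integral_div_one_add
    (F := fun p => ∑ n, exp (V p n)) (G := fun p => (∑ n, exp (-V p n)) / N ^ 2) (by fun_prop)
    ((integrable_finsetSum _ fun n _ => h_int n).div_const _)
    (ae_of_all _ fun p => by positivity) (ae_of_all _ fun p => ?_)
  · convert key using 3
    rw [integral_div, integral_finsetSum _ fun n _ => h_int n]
    simp only [h_neg_V, integral_exp_add_mul_fst_add_eval_gaussianReal, ha, add_halves,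
      sum_const, card_univ, Fintype.card_fin, nsmul_eq_mul]
    field_simp
  · rw [mul_div_assoc', le_div_iff₀ (by positivity), one_mul]
    simpa using sq_card_le_sum_exp_mul_sum_exp_neg (V p)
end
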